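/- arXiv:2604.19134 — 7 statements merged into one kernel-verified Lean document; each statement's English description precedes it below -/
import Mathlib

section
/- For all x in the open interval (0,1), it holds that 1/√(2(1−x)) − 1 ≤ 1/arccos(x) ≤ 1/√(2(1−x)). -/
/-!
With `θ = arccos x`, the quantity `√(2(1 - x)) = 2 sin (θ / 2)` is the chord subtending an arc of
length `θ`. The chord is at most the arc, which is the upper bound. The Taylor bound
`sin t ≥ t - t³/6` gives `chord ≥ θ - θ³/24`, and as `θ ≤ π/2` this yields `θ - chord ≤ θ · chord`,
which is the lower bound.
-/

open Real

namespace Real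

theorem two_mul_one_sub_cos (θ : ℝ) : 2 * (1 - cos θ) = (2 * sin (θ / 2)) ^ 2 := by
  have h := cos_two_mul (θ / 2)
  rw [show 2 * (θ / 2) = θ by ring] at h
  linarith [sin_sq_add_cos_sq (θ / 2)]

theorem sqrt_two_mul_one_sub_cos (θ : ℝ) : √(2 * (1 - cos θ)) = 2 * |sin (θ / 2)| := by
  rw [two_mul_one_sub_cos, sqrt_sq_eq_abs, abs_mul, abs_two]

theorem sqrt_two_mul_one_sub_cos_le_abs (θ : ℝ) : √(2 * (1 - cos θ)) ≤ |θ| := by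
  have := abs_sin_le_abs (x := θ / 2)
  rw [sqrt_two_mul_one_sub_cos, abs_div, abs_two] at *
  linarith

theorem sub_cube_div_24_le_sqrt_two_mul_one_sub_cos {θ : ℝ} (hθ : 0 ≤ θ) :
    θ - θ ^ 3 / 24 ≤ √(2 * (1 - cos θ)) := by
  have := sin_ge_sub_cube (x := θ / 2) (by positivity)
  rw [sqrt_two_mul_one_sub_cos]
  linarith [le_abs_self (sin (θ / 2))]

end Real

theorem one_div_sub_one_le_one_div_of_sub_cube_div_24_le {c θ : ℝ} (hc : 0 < c) (hθ : 0 < θ)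
    (hθ4 : θ ≤ 4) (h : θ - θ ^ 3 / 24 ≤ c) : 1 / c - 1 ≤ 1 / θ := by
  -- `θ - c ≤ θ³/24 ≤ θ (θ - θ³/24) ≤ c θ`, the middle step being `θ + θ² ≤ 24` for `θ ≤ 4`
  have key : θ - c ≤ c * θ := by
    nlinarith [mul_le_mul_of_nonneg_right h hθ.le, mul_nonneg (sq_nonneg θ) (by linarith : 0 ≤ 4 - θ)]
  rw [sub_le_iff_le_add, div_add_one hθ.ne', div_le_div_iff₀ hc hθ]
  linarith

theorem arccos_inv_bounds (x : ℝ) (hx : x ∈ Set.Ioo (0 : ℝ) 1) :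
    1 / Real.sqrt (2 * (1 - x)) - 1 ≤ 1 / Real.arccos x ∧
      1 / Real.arccos x ≤ 1 / Real.sqrt (2 * (1 - x)) := by
  obtain ⟨hx0, hx1⟩ := hx
  have hθ0 : 0 < arccos x := arccos_pos.mpr hx1
  have hθ4 : arccos x ≤ 4 := (arccos_le_pi_div_two.mpr hx0.le).trans (by linarith [pi_le_four])
  have hchord : 0 < √(2 * (1 - x)) := sqrt_pos.mpr (by linarith)
  have hlower := sub_cube_div_24_le_sqrt_two_mul_one_sub_cos hθ0.le
  have hupper := sqrt_two_mul_one_sub_cos_le_abs (arccos x)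
  rw [cos_arccos (by linarith) hx1.le] at hlower hupper
  rw [abs_of_pos hθ0] at hupper
  exact ⟨one_div_sub_one_le_one_div_of_sub_cube_div_24_le hchord hθ0 hθ4 hlower,
    one_div_le_one_div_of_le hchord hupper⟩
end

section
/- For all sufficiently large natural numbers n, setting Δ = n² + 4n − 4, the quantity |n − √Δ|·(3n−2+√Δ) / (2√(2n)·√(Δ − n√Δ)·√(n² − (n−2)√Δ)) is strictly greater than (n−1)(4n−1)/(4√2·n(n+2)). -/
set_option maxHeartbeats 1000000

theorem beta_plus_lower_bound :
    ∃ N : ℕ, ∀ n ≥ N,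
      let Δ : ℝ := (n : ℝ) ^ 2 + 4 * n - 4
      |(n : ℝ) - Real.sqrt Δ| * (3 * n - 2 + Real.sqrt Δ) /
          (2 * Real.sqrt (2 * n) * Real.sqrt (Δ - n * Real.sqrt Δ) *
            Real.sqrt ((n : ℝ) ^ 2 - ((n : ℝ) - 2) * Real.sqrt Δ)) >
        ((n : ℝ) - 1) * (4 * n - 1) / (4 * Real.sqrt 2 * n * (n + 2)) := by
  use 4
  intro n hn
  intro Δ
  set x : ℝ := (n : ℝ) with hx
  have hx4 : (4:ℝ) ≤ x := by rw [hx]; exact_mod_cast hn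
  have hΔdef : Δ = x ^ 2 + 4 * x - 4 := rfl
  set s : ℝ := Real.sqrt Δ with hs
  have hΔ0 : (0:ℝ) ≤ Δ := by rw [hΔdef]; nlinarith
  have hs2 : s ^ 2 = x ^ 2 + 4 * x - 4 := by
    rw [hs, Real.sq_sqrt hΔ0, hΔdef]
  have hs0 : (0:ℝ) ≤ s := Real.sqrt_nonneg _
  have hsle : s ≤ x + 2 := by nlinarith
  have hsge : x + 1 ≤ s := by nlinarith
  have hP : (0:ℝ) < Δ - x * s := by rw [hΔdef]; nlinarith
  have hQ : (0:ℝ) < x ^ 2 - (x - 2) * s := by nlinarith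
  have h2x : (0:ℝ) < 2 * x := by linarith
  have habs : |x - s| = s - x := by
    rw [abs_sub_comm]; exact abs_of_nonneg (by linarith)
  rw [habs]
  have hsq1 : 0 < Real.sqrt (2 * x) := Real.sqrt_pos.mpr h2x
  have hsq2 : 0 < Real.sqrt (Δ - x * s) := Real.sqrt_pos.mpr hP
  have hsq3 : 0 < Real.sqrt (x ^ 2 - (x - 2) * s) := Real.sqrt_pos.mpr hQ
  have hsqrt2 : (0:ℝ) < Real.sqrt 2 := Real.sqrt_pos.mpr (by norm_num)
  have hDpos : (0:ℝ) < 2 * Real.sqrt (2 * x) * Real.sqrt (Δ - x * s) *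
      Real.sqrt (x ^ 2 - (x - 2) * s) := by
    apply mul_pos (mul_pos (mul_pos (by norm_num) hsq1) hsq2) hsq3
  have hbpos : (0:ℝ) < 4 * Real.sqrt 2 * x * (x + 2) := by
    apply mul_pos (mul_pos (mul_pos (by norm_num) hsqrt2) (by linarith)) (by linarith)
  rw [gt_iff_lt]
  apply lt_of_pow_lt_pow_left₀ 2
    (div_nonneg (mul_nonneg (by linarith) (by linarith)) hDpos.le)
  rw [div_pow, div_pow, div_lt_div_iff₀ (pow_pos hbpos 2) (pow_pos hDpos 2)]
  have e1 : (2 * Real.sqrt (2 * x) * Real.sqrt (Δ - x * s) *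
      Real.sqrt (x ^ 2 - (x - 2) * s)) ^ 2
      = 8 * x * ((Δ - x * s) * (x ^ 2 - (x - 2) * s)) := by
    rw [mul_pow, mul_pow, mul_pow, Real.sq_sqrt h2x.le, Real.sq_sqrt hP.le,
      Real.sq_sqrt hQ.le]; ring
  have e2 : (4 * Real.sqrt 2 * x * (x + 2)) ^ 2 = 32 * x ^ 2 * (x + 2) ^ 2 := by
    rw [mul_pow, mul_pow, mul_pow, Real.sq_sqrt (by norm_num : (0:ℝ) ≤ 2)]; ring
  rw [e1, e2]
  have id1 : (s - x) * (3 * x - 2 + s) = 2 * (x - 1) * (s - x + 2) := by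
    linear_combination hs2
  have id2 : (Δ - x * s) * (x ^ 2 - (x - 2) * s)
      = 2 * (x - 1) * (s * (x * s - x ^ 2 - 2 * x + 4)) := by
    rw [hΔdef]; linear_combination (-(x ^ 2)) * hs2
  -- bounds
  have hw : (x + 2 - s) * (2 * x + 3) ≤ 8 := by
    nlinarith [mul_nonneg (show (0:ℝ) ≤ x + 2 - s by linarith)
      (show (0:ℝ) ≤ s - x - 1 by linarith)]
  have hb : 4 ≤ (x + 2) * (x + 2 - s) := by nlinarith [sq_nonneg (x + 2 - s)]
  have hu8 : (x + 2) * (x * s - x ^ 2 - 2 * x + 4) ≤ 8 := by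
    nlinarith [mul_nonneg (show (0:ℝ) ≤ x by linarith)
      (show (0:ℝ) ≤ (x + 2) * (x + 2 - s) - 4 by linarith)]
  have hu0 : 0 < x * s - x ^ 2 - 2 * x + 4 := by
    nlinarith [mul_nonneg (show (0:ℝ) ≤ x by linarith)
      (show (0:ℝ) ≤ 8 - (x + 2 - s) * (2 * x + 3) by linarith)]
  have hvlb : 8 * x + 4 ≤ (2 * x + 3) * (s - x + 2) := by nlinarith [hw]
  have hsu : s * (x * s - x ^ 2 - 2 * x + 4) ≤ 8 := by
    nlinarith [mul_nonneg (show (0:ℝ) ≤ x + 2 - s by linarith) hu0.le, hu8]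
  have hvsq : (8 * x + 4) ^ 2 ≤ ((2 * x + 3) * (s - x + 2)) ^ 2 :=
    pow_le_pow_left₀ (by linarith) hvlb 2
  have hcoef : (0:ℝ) ≤ (x - 1) * (4 * x - 1) ^ 2 * (2 * x + 3) ^ 2 :=
    mul_nonneg (mul_nonneg (by linarith) (sq_nonneg _)) (sq_nonneg _)
  have key : (x - 1) * (4 * x - 1) ^ 2 * (s * (x * s - x ^ 2 - 2 * x + 4))
      < 8 * x * (x + 2) ^ 2 * (s - x + 2) ^ 2 := by
    have hc : (0:ℝ) < (2 * x + 3) ^ 2 := pow_pos (by linarith) 2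
    refine lt_of_mul_lt_mul_right ?_ hc.le
    calc (x - 1) * (4 * x - 1) ^ 2 * (s * (x * s - x ^ 2 - 2 * x + 4)) * (2 * x + 3) ^ 2
        ≤ 8 * ((x - 1) * (4 * x - 1) ^ 2 * (2 * x + 3) ^ 2) := by
          nlinarith [mul_le_mul_of_nonneg_left hsu hcoef]
      _ < 8 * x * (x + 2) ^ 2 * (8 * x + 4) ^ 2 := by nlinarith
      _ ≤ 8 * x * (x + 2) ^ 2 * (s - x + 2) ^ 2 * (2 * x + 3) ^ 2 := by
          nlinarith [mul_le_mul_of_nonneg_left hvsq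
            (show (0:ℝ) ≤ 8 * x * (x + 2) ^ 2 by positivity)]
  calc ((x - 1) * (4 * x - 1)) ^ 2 * (8 * x * ((Δ - x * s) * (x ^ 2 - (x - 2) * s)))
      = 16 * x * (x - 1) ^ 2 *
        ((x - 1) * (4 * x - 1) ^ 2 * (s * (x * s - x ^ 2 - 2 * x + 4))) := by
        rw [id2]; ring
    _ < 16 * x * (x - 1) ^ 2 * (8 * x * (x + 2) ^ 2 * (s - x + 2) ^ 2) := by
        apply mul_lt_mul_of_pos_left key
        apply mul_pos (mul_pos (by norm_num) (by linarith : (0:ℝ) < x))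
          (pow_pos (by linarith) 2)
    _ = ((s - x) * (3 * x - 2 + s)) ^ 2 * (32 * x ^ 2 * (x + 2) ^ 2) := by
        rw [id1]; ring
end

section
/- For all sufficiently large natural numbers n, setting Δ = n² + 4n − 4, we have √2·(n−1)·(√Δ + n) / (n·√n·√(Δ − n√Δ)) > (n+1)(n−1)(2n+1) / (n²(n+2)). -/
theorem third_term_lower_bound :
    ∃ N : ℕ, ∀ n ≥ N,
      let Δ : ℝ := (n : ℝ) ^ 2 + 4 * n - 4
      Real.sqrt 2 * ((n : ℝ) - 1) * (Real.sqrt Δ + n) /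
          ((n : ℝ) * Real.sqrt n * Real.sqrt (Δ - n * Real.sqrt Δ)) >
        ((n : ℝ) + 1) * ((n : ℝ) - 1) * (2 * n + 1) / ((n : ℝ) ^ 2 * (n + 2)) := by
  use 3
  intro n hn
  intro Δ
  have hn' : (3 : ℝ) ≤ (n : ℝ) := by exact_mod_cast hn
  have hΔ : Δ = (n : ℝ) ^ 2 + 4 * n - 4 := rfl
  clear_value Δ
  have hΔpos : 0 < Δ := by rw [hΔ]; nlinarith
  set s := Real.sqrt Δ with hsdef
  clear_value s
  have hs2 : s ^ 2 = Δ := by rw [hsdef]; exact Real.sq_sqrt hΔpos.le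
  have hspos : 0 < s := by rw [hsdef]; exact Real.sqrt_pos.mpr hΔpos
  have hsub : s ≤ (n : ℝ) + 2 := by
    have h1 : Δ ≤ ((n : ℝ) + 2) ^ 2 := by rw [hΔ]; nlinarith
    rw [hsdef]
    calc Real.sqrt Δ ≤ Real.sqrt (((n : ℝ) + 2) ^ 2) := Real.sqrt_le_sqrt h1
    _ = (n : ℝ) + 2 := Real.sqrt_sq (by linarith)
  have hn2pos : (0 : ℝ) < (n : ℝ) + 2 := by linarith
  have hslb' : ((n : ℝ) + 2) ^ 2 - 8 ≤ ((n : ℝ) + 2) * s := by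
    have hc : (0 : ℝ) ≤ (n : ℝ) + 2 - 8 / ((n : ℝ) + 2) := by
      rw [sub_nonneg, div_le_iff₀ hn2pos]; nlinarith
    have hlb : (n : ℝ) + 2 - 8 / ((n : ℝ) + 2) ≤ s := by
      rw [hsdef, show (n : ℝ) + 2 - 8 / ((n : ℝ) + 2) = Real.sqrt (((n:ℝ) + 2 - 8/((n:ℝ)+2))^2)
        from (Real.sqrt_sq hc).symm]
      apply Real.sqrt_le_sqrt
      have h8 : (8 / ((n : ℝ) + 2)) * ((n : ℝ) + 2) = 8 := by field_simp
      have h8sq : (8 / ((n : ℝ) + 2)) ^ 2 ≤ 8 := by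
        rw [div_pow, div_le_iff₀ (by positivity)]; nlinarith
      rw [hΔ]; nlinarith
    have := mul_le_mul_of_nonneg_left hlb hn2pos.le
    have h8 : ((n : ℝ) + 2) * (8 / ((n : ℝ) + 2)) = 8 := by field_simp
    nlinarith [this]
  have hsubpos : 0 < Δ - (n : ℝ) * s := by
    have : (n : ℝ) * s ≤ (n : ℝ) * ((n : ℝ) + 2) :=
      mul_le_mul_of_nonneg_left hsub (by linarith)
    rw [hΔ] at *; nlinarith
  set t := Real.sqrt (Δ - (n : ℝ) * s) with htdef
  clear_value t
  have ht2 : t ^ 2 = Δ - (n : ℝ) * s := by rw [htdef]; exact Real.sq_sqrt hsubpos.le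
  have htpos : 0 < t := by rw [htdef]; exact Real.sqrt_pos.mpr hsubpos
  set u := Real.sqrt (n : ℝ) with hudef
  clear_value u
  have hu2 : u ^ 2 = (n : ℝ) := by rw [hudef]; exact Real.sq_sqrt (by linarith)
  have hupos : 0 < u := by rw [hudef]; exact Real.sqrt_pos.mpr (by linarith)
  set q := Real.sqrt 2 with hqdef
  clear_value q
  have hq2 : q ^ 2 = 2 := by rw [hqdef]; exact Real.sq_sqrt (by norm_num)
  have hqpos : 0 < q := by rw [hqdef]; exact Real.sqrt_pos.mpr (by norm_num)
  have hBpos : 0 < (n : ℝ) * u * t := by positivity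
  have hDpos : 0 < (n : ℝ) ^ 2 * ((n : ℝ) + 2) := by positivity
  rw [gt_iff_lt, div_lt_div_iff₀ hDpos hBpos]
  have hCBnn : 0 ≤ ((n : ℝ) + 1) * ((n : ℝ) - 1) * (2 * n + 1) * ((n : ℝ) * u * t) := by
    have : (0:ℝ) ≤ ((n : ℝ) + 1) * ((n : ℝ) - 1) * (2 * n + 1) := by nlinarith
    positivity
  have hADnn : 0 ≤ q * ((n : ℝ) - 1) * (s + n) * ((n : ℝ) ^ 2 * ((n : ℝ) + 2)) := by
    have : (0:ℝ) ≤ (n : ℝ) - 1 := by linarith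
    positivity
  apply lt_of_pow_lt_pow_left₀ 2 hADnn
  have e1 : (((n : ℝ) + 1) * ((n : ℝ) - 1) * (2 * n + 1) * ((n : ℝ) * u * t)) ^ 2 =
      (((n : ℝ) + 1) * ((n : ℝ) - 1) * (2 * n + 1)) ^ 2 * ((n : ℝ) ^ 2 * u ^ 2) * t ^ 2 := by
    ring
  have e2 : (q * ((n : ℝ) - 1) * (s + n) * ((n : ℝ) ^ 2 * ((n : ℝ) + 2))) ^ 2 =
      q ^ 2 * ((n : ℝ) - 1) ^ 2 * ((s + n) ^ 2) * ((n : ℝ) ^ 2 * ((n : ℝ) + 2)) ^ 2 := by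
    ring
  have hs2' : s ^ 2 = (n : ℝ) ^ 2 + 4 * n - 4 := hs2.trans hΔ
  have hsq : (s + (n : ℝ)) ^ 2 = 2 * (n : ℝ) ^ 2 + 4 * n - 4 + 2 * n * s := by
    linear_combination hs2'
  rw [e1, e2, hu2, ht2, hq2, hΔ, hsq]
  -- now everything is linear in s
  have hα : (0:ℝ) ≤ 4 * (n:ℝ) ^ 2 * ((n:ℝ) + 2) ^ 2 + (n:ℝ) * ((n:ℝ) + 1) ^ 2 * (2 * (n:ℝ) + 1) ^ 2 := by
    positivity
  have h1 := mul_le_mul_of_nonneg_left hslb' hα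
  have hQ : (0:ℝ) < (4 * (n:ℝ) ^ 2 * ((n:ℝ) + 2) ^ 2 + (n:ℝ) * ((n:ℝ) + 1) ^ 2 * (2 * (n:ℝ) + 1) ^ 2)
      * (((n:ℝ) + 2) ^ 2 - 8)
      + ((n:ℝ) + 2) * (2 * (n:ℝ) * ((n:ℝ) + 2) ^ 2 * (2 * (n:ℝ) ^ 2 + 4 * (n:ℝ) - 4)
        - ((n:ℝ) + 1) ^ 2 * (2 * (n:ℝ) + 1) ^ 2 * ((n:ℝ) ^ 2 + 4 * (n:ℝ) - 4)) := by
    have hn0 : (0:ℝ) < (n:ℝ) := by linarith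
    have ha1 : (0:ℝ) ≤ ((n:ℝ) - 3) * (n:ℝ) ^ 2 := mul_nonneg (by linarith) (sq_nonneg _)
    have ha2 : (0:ℝ) ≤ ((n:ℝ) - 3) * (n:ℝ) := mul_nonneg (by linarith) hn0.le
    have h5 : (0:ℝ) ≤ (n:ℝ) ^ 5 := by positivity
    have h4 : (0:ℝ) ≤ (n:ℝ) ^ 4 := by positivity
    linarith [h5, h4, ha1, ha2, hn0.le]
  have hP2 : 0 < ((n:ℝ) + 2) * (2 * (n:ℝ) * ((n:ℝ) + 2) ^ 2 * (2 * (n:ℝ) ^ 2 + 4 * (n:ℝ) - 4 + 2 * (n:ℝ) * s)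
      - ((n:ℝ) + 1) ^ 2 * (2 * (n:ℝ) + 1) ^ 2 * ((n:ℝ) ^ 2 + 4 * (n:ℝ) - 4 - (n:ℝ) * s)) := by
    linarith [h1, hQ]
  have hP : 0 < 2 * (n:ℝ) * ((n:ℝ) + 2) ^ 2 * (2 * (n:ℝ) ^ 2 + 4 * (n:ℝ) - 4 + 2 * (n:ℝ) * s)
      - ((n:ℝ) + 1) ^ 2 * (2 * (n:ℝ) + 1) ^ 2 * ((n:ℝ) ^ 2 + 4 * (n:ℝ) - 4 - (n:ℝ) * s) := by
    exact (mul_pos_iff_of_pos_left hn2pos).mp hP2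
  have hfac : (0:ℝ) < ((n:ℝ) - 1) ^ 2 * (n:ℝ) ^ 3 := by
    have : (0:ℝ) < (n:ℝ) - 1 := by linarith
    positivity
  linarith [mul_pos hfac hP]
end

section
/- For all sufficiently large natural numbers n, setting Δ = n² + 4n − 4, the quantity |n − √Δ|·(3n−2+√Δ) / (2√(2n)·√(Δ − n√Δ)·√(n² − (n−2)√Δ)) is strictly less than √(2n² + 6n − 4)/(2n+1). -/
set_option maxHeartbeats 1000000 in
theorem beta_plus_upper_bound :
    ∃ N : ℕ, ∀ n ≥ N,
      let Δ : ℝ := (n : ℝ) ^ 2 + 4 * n - 4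
      |(n : ℝ) - Real.sqrt Δ| * (3 * n - 2 + Real.sqrt Δ) /
          (2 * Real.sqrt (2 * n) * Real.sqrt (Δ - n * Real.sqrt Δ) *
            Real.sqrt ((n : ℝ) ^ 2 - ((n : ℝ) - 2) * Real.sqrt Δ)) <
        Real.sqrt (2 * (n : ℝ) ^ 2 + 6 * n - 4) / (2 * n + 1) := by
  use 10
  intro n hn
  intro Δ
  set x : ℝ := (n : ℝ) with hxdef
  have hx : (10 : ℝ) ≤ x := by rw [hxdef]; exact_mod_cast hn
  have hx0 : (0 : ℝ) < x := by linarith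
  have h2 : 10 * x ≤ x ^ 2 := by nlinarith
  have h3 : 10 * x ^ 2 ≤ x ^ 3 := by nlinarith
  have hΔdef : Δ = x ^ 2 + 4 * x - 4 := rfl
  have hΔ0 : (0 : ℝ) ≤ Δ := by rw [hΔdef]; nlinarith
  set s : ℝ := Real.sqrt Δ with hsdef
  have hs0 : 0 ≤ s := Real.sqrt_nonneg _
  have hs2 : s ^ 2 = x ^ 2 + 4 * x - 4 := by
    rw [hsdef, Real.sq_sqrt hΔ0, hΔdef]
  have hsx : x < s := by nlinarith
  have hsu : s < x + 2 := by nlinarith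
  have hxs : x ^ 2 + 2 * x - 4 < x * s := by nlinarith
  -- auxiliary square roots
  have h2x : (0 : ℝ) < 2 * x := by linarith
  set u : ℝ := Real.sqrt (2 * x) with hudef
  have hu0 : 0 < u := Real.sqrt_pos.mpr h2x
  have hu2 : u ^ 2 = 2 * x := Real.sq_sqrt h2x.le
  have hvarg : Δ - x * s = s * (s - x) := by rw [hΔdef]; nlinarith
  have hvpos : 0 < Δ - x * s := by
    rw [hvarg]; exact mul_pos (by linarith) (by linarith)
  set v : ℝ := Real.sqrt (Δ - x * s) with hvdef
  have hv0 : 0 < v := Real.sqrt_pos.mpr hvpos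
  have hv2 : v ^ 2 = Δ - x * s := Real.sq_sqrt hvpos.le
  have hwpos : 0 < x ^ 2 - (x - 2) * s := by nlinarith
  set w : ℝ := Real.sqrt (x ^ 2 - (x - 2) * s) with hwdef
  have hw0 : 0 < w := Real.sqrt_pos.mpr hwpos
  have hw2 : w ^ 2 = x ^ 2 - (x - 2) * s := Real.sq_sqrt hwpos.le
  have htpos : (0 : ℝ) < 2 * x ^ 2 + 6 * x - 4 := by nlinarith
  set t : ℝ := Real.sqrt (2 * x ^ 2 + 6 * x - 4) with htdef
  have ht0 : 0 < t := Real.sqrt_pos.mpr htpos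
  have ht2 : t ^ 2 = 2 * x ^ 2 + 6 * x - 4 := Real.sq_sqrt htpos.le
  -- the key polynomial inequality
  have hP : (0:ℝ) < 16 * x ^ 4 + 32 * x ^ 3 - 32 * x ^ 2 + 12 * x + 4 := by nlinarith
  have hPs := mul_lt_mul_of_pos_left hxs hP
  have hs3 : s ^ 3 = (x ^ 2 + 4 * x - 4) * s := by
    rw [show s ^ 3 = s ^ 2 * s by ring, hs2]
  have hident : 8 * x * (2 * x ^ 2 + 6 * x - 4) * (s * (x ^ 2 - (x - 2) * s)) -
      (s - x) * (3 * x - 2 + s) ^ 2 * (2 * x + 1) ^ 2 =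
      (16 * x ^ 5 + 32 * x ^ 4 - 32 * x ^ 3 + 12 * x ^ 2 + 4 * x) * s -
        (16 * x ^ 6 + 64 * x ^ 5 - 32 * x ^ 4 - 564 * x ^ 3 + 700 * x ^ 2 - 232 * x + 16) := by
    linear_combination (-16 * x ^ 4 - 36 * x ^ 3 + 124 * x ^ 2 - 53 * x + 4 +
      (-4 * x ^ 2 - 4 * x - 1) * s) * hs2
  have hPs2 : (16 * x ^ 4 + 32 * x ^ 3 - 32 * x ^ 2 + 12 * x + 4) * (x ^ 2 + 2 * x - 4) <
      (16 * x ^ 5 + 32 * x ^ 4 - 32 * x ^ 3 + 12 * x ^ 2 + 4 * x) * s := by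
    calc (16 * x ^ 4 + 32 * x ^ 3 - 32 * x ^ 2 + 12 * x + 4) * (x ^ 2 + 2 * x - 4)
        < (16 * x ^ 4 + 32 * x ^ 3 - 32 * x ^ 2 + 12 * x + 4) * (x * s) := hPs
      _ = (16 * x ^ 5 + 32 * x ^ 4 - 32 * x ^ 3 + 12 * x ^ 2 + 4 * x) * s := by ring
  have hmarg : (0:ℝ) <
      (16 * x ^ 4 + 32 * x ^ 3 - 32 * x ^ 2 + 12 * x + 4) * (x ^ 2 + 2 * x - 4) -
        (16 * x ^ 6 + 64 * x ^ 5 - 32 * x ^ 4 - 564 * x ^ 3 + 700 * x ^ 2 - 232 * x + 16) := by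
    have e : (16 * x ^ 4 + 32 * x ^ 3 - 32 * x ^ 2 + 12 * x + 4) * (x ^ 2 + 2 * x - 4) -
        (16 * x ^ 6 + 64 * x ^ 5 - 32 * x ^ 4 - 564 * x ^ 3 + 700 * x ^ 2 - 232 * x + 16) =
        384 * x ^ 3 - 544 * x ^ 2 + 192 * x - 32 := by ring
    rw [e]
    linarith [h2, h3, hx]
  have hpos : 0 < (16 * x ^ 5 + 32 * x ^ 4 - 32 * x ^ 3 + 12 * x ^ 2 + 4 * x) * s -
      (16 * x ^ 6 + 64 * x ^ 5 - 32 * x ^ 4 - 564 * x ^ 3 + 700 * x ^ 2 - 232 * x + 16) := by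
    linarith [hPs2, hmarg]
  have key : (s - x) * (3 * x - 2 + s) ^ 2 * (2 * x + 1) ^ 2 <
      8 * x * (2 * x ^ 2 + 6 * x - 4) * (s * (x ^ 2 - (x - 2) * s)) := by
    linarith [hident, hpos]
  have habs : |x - s| = s - x := by
    rw [abs_of_nonpos (by linarith)]; ring
  have hden : 0 < 2 * u * v * w := by positivity
  have h2x1 : (0 : ℝ) < 2 * x + 1 := by linarith
  rw [habs, div_lt_div_iff₀ hden h2x1]
  -- compare squares
  have hb0 : 0 ≤ t * (2 * u * v * w) := by positivity
  have hsq : ((s - x) * (3 * x - 2 + s) * (2 * x + 1)) ^ 2 <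
      (t * (2 * u * v * w)) ^ 2 := by
    have e1 : ((s - x) * (3 * x - 2 + s) * (2 * x + 1)) ^ 2 =
        (s - x) * ((s - x) * (3 * x - 2 + s) ^ 2 * (2 * x + 1) ^ 2) := by ring
    have e2 : (t * (2 * u * v * w)) ^ 2 =
        t ^ 2 * (4 * u ^ 2 * v ^ 2 * w ^ 2) := by ring
    rw [e1, e2, ht2, hu2, hv2, hw2, hvarg]
    have hkey2 := mul_lt_mul_of_pos_left key (show 0 < s - x by linarith)
    calc (s - x) * ((s - x) * (3 * x - 2 + s) ^ 2 * (2 * x + 1) ^ 2)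
        < (s - x) * (8 * x * (2 * x ^ 2 + 6 * x - 4) * (s * (x ^ 2 - (x - 2) * s))) := hkey2
      _ = (2 * x ^ 2 + 6 * x - 4) * (4 * (2 * x) * (s * (s - x)) * (x ^ 2 - (x - 2) * s)) := by
        ring
  have hfin := lt_of_pow_lt_pow_left₀ 2 hb0 hsq
  linarith [hfin]
end

section
/- For all sufficiently large natural numbers n, setting Δ = n² + 4n − 4 and λ = (n−2+√Δ)/(2n) and θ = arccos(λ) and t* = ⌊π/(2θ)⌋, it holds that (π/2)·(√(n(2n+3)/8) − 2) ≤ t* ≤ (π/4)·√(n(n+2)). -/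
/-!
With `θ = arccos λ`, one has exactly `1 - λ = 4 / (n (n + 2 + √Δ))`, and `n + 3/2 ≤ √Δ ≤ n + 2`.
The bound `1 - θ² / 2 ≤ cos θ` gives `θ² ≥ 2 (1 - λ) ≥ 4 / (n (n + 2))`, while `θ ≤ tan θ` gives
`θ² ≤ (1 - λ²) / λ² ≤ 8 / (n (2n + 3))`. Taking the floor of `π / (2θ)` costs at most `1 ≤ π`.
-/

open Real

lemma two_mul_one_sub_le_sq_arccos {y : ℝ} (hy₁ : -1 ≤ y) (hy₂ : y ≤ 1) :
    2 * (1 - y) ≤ arccos y ^ 2 := by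
  have := one_sub_sq_div_two_le_cos (x := arccos y)
  rw [cos_arccos hy₁ hy₂] at this
  linarith

lemma sq_arccos_le {y : ℝ} (hy₁ : 0 < y) (hy₂ : y ≤ 1) : arccos y ^ 2 ≤ (1 - y ^ 2) / y ^ 2 := by
  have htan : arccos y ≤ √(1 - y ^ 2) / y :=
    tan_arccos y ▸ le_tan (arccos_nonneg y) (arccos_lt_pi_div_two.2 hy₁)
  calc arccos y ^ 2 ≤ (√(1 - y ^ 2) / y) ^ 2 := pow_le_pow_left₀ (arccos_nonneg y) htan 2
    _ = (1 - y ^ 2) / y ^ 2 := by rw [div_pow, sq_sqrt (by nlinarith)]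

lemma pi_div_two_mul_sqrt_sub_two_le_floor {θ c : ℝ} (hθ : 0 < θ) (hc : 0 < c)
    (h : θ ^ 2 ≤ 1 / c) : π / 2 * (√c - 2) ≤ ⌊π / (2 * θ)⌋ := by
  have hθc : θ * √c ≤ 1 := by
    rw [← sqrt_sq hθ.le, ← sqrt_mul (sq_nonneg θ), ← sqrt_one]
    exact sqrt_le_sqrt (by rwa [← le_div_iff₀ hc])
  have : π / 2 * √c ≤ π / (2 * θ) := by
    rw [le_div_iff₀ (by positivity)]
    nlinarith [pi_pos]
  linarith [Int.sub_one_lt_floor (π / (2 * θ)), pi_gt_three]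

lemma floor_pi_div_two_mul_le {θ d : ℝ} (hθ : 0 < θ) (hd : 0 < d)
    (h : 4 / d ≤ θ ^ 2) : (⌊π / (2 * θ)⌋ : ℝ) ≤ π / 4 * √d := by
  have hθd : 2 ≤ θ * √d := by
    rw [← sqrt_sq hθ.le, ← sqrt_mul (sq_nonneg θ), show (2 : ℝ) = √4 by norm_num]
    exact sqrt_le_sqrt (by rwa [← div_le_iff₀ hd])
  have : π / (2 * θ) ≤ π / 4 * √d := by
    rw [div_le_iff₀ (by positivity)]
    nlinarith [pi_pos]
  linarith [Int.floor_le (π / (2 * θ))]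

noncomputable def lam (x : ℝ) : ℝ := (x - 2 + √(x ^ 2 + 4 * x - 4)) / (2 * x)

lemma one_sub_lam {x : ℝ} (hx : 1 ≤ x) :
    1 - lam x = 4 / (x * (x + 2 + √(x ^ 2 + 4 * x - 4))) := by
  have hs_sq := sq_sqrt (show 0 ≤ x ^ 2 + 4 * x - 4 by nlinarith)
  have hs₀ := sqrt_nonneg (x ^ 2 + 4 * x - 4)
  rw [lam]
  generalize √(x ^ 2 + 4 * x - 4) = s at *
  field_simp
  nlinarith

lemma four_div_le_sq_arccos_lam {x : ℝ} (hx : 1 ≤ x) :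
    4 / (x * (x + 2)) ≤ arccos (lam x) ^ 2 := by
  have hε := one_sub_lam hx
  have hs : √(x ^ 2 + 4 * x - 4) ≤ x + 2 := sqrt_le_iff.2 ⟨by linarith, by nlinarith⟩
  have hs₀ := sqrt_nonneg (x ^ 2 + 4 * x - 4)
  generalize √(x ^ 2 + 4 * x - 4) = s at *
  have hε₀ : 0 ≤ 1 - lam x := hε ▸ by positivity
  have hε₁ : 1 - lam x ≤ 2 := by
    rw [hε, div_le_iff₀ (by positivity)]; nlinarith
  calc 4 / (x * (x + 2)) ≤ 2 * (1 - lam x) := by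
        rw [hε, div_le_iff₀ (by positivity)]
        field_simp
        nlinarith
    _ ≤ arccos (lam x) ^ 2 := two_mul_one_sub_le_sq_arccos (by linarith) (by linarith)

lemma sq_arccos_lam_le {x : ℝ} (hx : 16 ≤ x) :
    arccos (lam x) ^ 2 ≤ 8 / (x * (2 * x + 3)) := by
  have hε := one_sub_lam (by linarith : 1 ≤ x)
  have hs : x + 3 / 2 ≤ √(x ^ 2 + 4 * x - 4) := le_sqrt_of_sq_le (by nlinarith)
  generalize √(x ^ 2 + 4 * x - 4) = s at *
  have hε₀ : 0 ≤ 1 - lam x := hε ▸ div_nonneg (by norm_num) (by nlinarith)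
  have hεu : (1 - lam x) * (x * (2 * x + 7 / 2)) ≤ 4 := by
    rw [← le_div_iff₀ (by positivity), hε]
    exact div_le_div_of_nonneg_left (by norm_num) (by positivity) (by nlinarith)
  -- `x (2x + 7/2) - x (2x + 3) = x / 2 ≥ 8` is where `x ≥ 16` is needed
  have hεv : (1 - lam x) * (x * (2 * x + 3) + 8) ≤ 4 :=
    (mul_le_mul_of_nonneg_left (by nlinarith) hε₀).trans hεu
  have hlam : 0 < lam x := by
    nlinarith [mul_le_mul_of_nonneg_left (show (8 : ℝ) ≤ x * (2 * x + 3) + 8 by nlinarith) hε₀]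
  calc arccos (lam x) ^ 2 ≤ (1 - lam x ^ 2) / lam x ^ 2 := sq_arccos_le hlam (by linarith)
    _ ≤ 8 / (x * (2 * x + 3)) := by
      rw [div_le_div_iff₀ (by positivity) (by positivity)]
      nlinarith [mul_nonneg (sq_nonneg (1 - lam x)) (by positivity : (0 : ℝ) ≤ x * (2 * x + 3))]

theorem measurement_time_bounds :
    ∃ N : ℕ, ∀ n ≥ N,
      let Δ : ℝ := (n : ℝ) ^ 2 + 4 * n - 4
      let lam : ℝ := ((n : ℝ) - 2 + Real.sqrt Δ) / (2 * n)
      let θ : ℝ := Real.arccos lam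
      let tstar : ℤ := ⌊Real.pi / (2 * θ)⌋
      Real.pi / 2 * (Real.sqrt ((n : ℝ) * (2 * n + 3) / 8) - 2) ≤ (tstar : ℝ) ∧
        (tstar : ℝ) ≤ Real.pi / 4 * Real.sqrt ((n : ℝ) * (n + 2)) := by
  refine ⟨16, fun n hn => ?_⟩
  have hx : (16 : ℝ) ≤ n := by exact_mod_cast hn
  show π / 2 * (√(n * (2 * n + 3) / 8) - 2) ≤ ⌊π / (2 * arccos (lam n))⌋ ∧
    ⌊π / (2 * arccos (lam n))⌋ ≤ π / 4 * √(n * (n + 2))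
  have hlower := four_div_le_sq_arccos_lam (x := n) (by linarith)
  have hθ : 0 < arccos (lam n) := by
    nlinarith [arccos_nonneg (lam n), show (0 : ℝ) < 4 / (n * (n + 2)) by positivity]
  exact ⟨pi_div_two_mul_sqrt_sub_two_le_floor hθ (by positivity)
      (by rw [one_div_div]; exact sq_arccos_lam_le hx),
    floor_pi_div_two_mul_le hθ (by positivity) hlower⟩
end

section
/- Let C_n be the cycle graph on n ≥ 3 vertices with symmetric arc set A (so |A| = 2n), let a ∈ A be a marked arc with sign function σ_a (value −1 on a, +1 elsewhere), and let U be the |A| × |A| matrix with entries U_{w,z} = σ_a(w⁻¹)σ_a(z)·δ_{o(w),t(z)} − δ_{w,z⁻¹}. Then for every non-negative integer τ and every arc w, the w-entry of U^τ applied to the normalized all-ones vector j = (1/√(2n))·𝟙 equals ±1/√(2n). In particular |(U^τ j)_a|² = 1/(2n). -/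
/-! Every vertex of `C_n` has degree 2, so the arcs ending at the origin of `w` are `w⁻¹` and
one further arc `w.prev`. In `(U v)_w` the back-tracking contribution `σ(w⁻¹)² v_{w⁻¹}` cancels
against `-v_{w⁻¹}`, leaving `(U v)_w = σ(w⁻¹) σ(w.prev) v_{w.prev}`: `U` is a signed permutation
matrix, so it preserves the property that all entries of a vector have absolute value `1/√(2n)`. -/

/-- The symmetric arc set of the cycle graph `C_n` on vertex set `ZMod n`:
arcs `(x, y)` with `y = x + 1` or `x = y + 1`. -/
def CycleArc (n : ℕ) : Type :=
  {p : ZMod n × ZMod n // p.2 - p.1 = 1 ∨ p.1 - p.2 = 1}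

instance (n : ℕ) [NeZero n] : Fintype (CycleArc n) := by
  unfold CycleArc; infer_instance

instance (n : ℕ) : DecidableEq (CycleArc n) := by
  unfold CycleArc; infer_instance

/-- The reversal `a⁻¹` of an arc. -/
def CycleArc.rev {n : ℕ} (w : CycleArc n) : CycleArc n :=
  ⟨(w.1.2, w.1.1), w.2.symm⟩

namespace CycleArc

variable {n : ℕ}

theorem eq_rev_iff {w z : CycleArc n} : w = z.rev ↔ w.rev = z :=
  ⟨fun h => h ▸ rfl, fun h => h ▸ rfl⟩

theorem ext {w z : CycleArc n} (h₁ : w.1.1 = z.1.1) (h₂ : w.1.2 = z.1.2) : w = z :=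
  Subtype.ext (Prod.ext h₁ h₂)

/-- For `w = (x, y)`, the arc `(2x - y, x)`: it ends at the origin of `w` and, unlike `w.rev`,
does not come from `y`. -/
def prev (w : CycleArc n) : CycleArc n :=
  ⟨(2 * w.1.1 - w.1.2, w.1.1), by
    rcases w.2 with h | h
    · exact Or.inl (by linear_combination h)
    · exact Or.inr (by linear_combination h)⟩

theorem rev_ne_prev (hn : 3 ≤ n) (w : CycleArc n) : w.rev ≠ w.prev := by
  have h2 : (2 : ZMod n) ≠ 0 := fun h =>
    absurd (Nat.le_of_dvd two_pos ((ZMod.natCast_eq_zero_iff 2 n).mp (by exact_mod_cast h)))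
      (by omega)
  intro h
  have hy : w.1.2 = 2 * w.1.1 - w.1.2 := congrArg (fun z : CycleArc n => z.1.1) h
  rcases w.2 with h' | h'
  · exact h2 (by linear_combination hy - 2 * h')
  · exact h2 (by linear_combination -hy - 2 * h')

theorem eq_rev_or_eq_prev {w z : CycleArc n} (h : z.1.2 = w.1.1) : z = w.rev ∨ z = w.prev := by
  rcases z.2 with hz | hz <;> rcases w.2 with hw | hw
  · exact Or.inr (ext (by simp only [prev]; linear_combination h - hz + hw) h)
  · exact Or.inl (ext (by simp only [rev]; linear_combination h - hz + hw) h)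
  · exact Or.inl (ext (by simp only [rev]; linear_combination h + hz - hw) h)
  · exact Or.inr (ext (by simp only [prev]; linear_combination h + hz - hw) h)

theorem sum_ite_terminus_eq_origin [NeZero n] (hn : 3 ≤ n) (w : CycleArc n) (f : CycleArc n → ℝ) :
    ∑ z : CycleArc n, (if w.1.1 = z.1.2 then f z else 0) = f w.rev + f w.prev := by
  rw [Fintype.sum_eq_add w.rev w.prev (rev_ne_prev hn w)]
  · exact congrArg₂ (· + ·) (if_pos rfl) (if_pos rfl)
  · intro z ⟨hrev, hprev⟩
    have : ¬ w.1.1 = z.1.2 := fun h => (eq_rev_or_eq_prev h.symm).elim hrev hprev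
    rw [if_neg this]

/-- The paper's `U_σ` for the 2-regular graph `C_n`. -/
def walkMatrix (σ : CycleArc n → ℝ) : Matrix (CycleArc n) (CycleArc n) ℝ :=
  Matrix.of fun w z =>
    σ w.rev * σ z * (if w.1.1 = z.1.2 then 1 else 0) - (if w = z.rev then 1 else 0)

theorem walkMatrix_mulVec_apply [NeZero n] (hn : 3 ≤ n) {σ : CycleArc n → ℝ}
    (hσ : ∀ u, |σ u| = 1) (v : CycleArc n → ℝ) (w : CycleArc n) :
    (walkMatrix σ).mulVec v w = σ w.rev * σ w.prev * v w.prev := by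
  have hsq : σ w.rev * σ w.rev = 1 := by rw [← abs_mul_abs_self, hσ, one_mul]
  have hback : ∑ z : CycleArc n, (if w = z.rev then (1 : ℝ) else 0) * v z = v w.rev := by
    simp_rw [eq_rev_iff, ite_mul, one_mul, zero_mul, Finset.sum_ite_eq, Finset.mem_univ, if_true]
  have hforward : ∑ z : CycleArc n, σ w.rev * σ z * (if w.1.1 = z.1.2 then 1 else 0) * v z =
      σ w.rev * σ w.rev * v w.rev + σ w.rev * σ w.prev * v w.prev := by
    rw [← sum_ite_terminus_eq_origin hn w fun z => σ w.rev * σ z * v z]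
    refine Finset.sum_congr rfl fun z _ => ?_
    split_ifs <;> ring
  simp only [walkMatrix, Matrix.mulVec, dotProduct, Matrix.of_apply, sub_mul,
    Finset.sum_sub_distrib]
  rw [hforward, hback, hsq]
  ring

theorem abs_walkMatrix_pow_mulVec_apply [NeZero n] (hn : 3 ≤ n) {σ : CycleArc n → ℝ}
    (hσ : ∀ u, |σ u| = 1) (v : CycleArc n → ℝ) (τ : ℕ) (w : CycleArc n) :
    |(walkMatrix σ ^ τ).mulVec v w| = |v (prev^[τ] w)| := by
  induction τ generalizing w with
  | zero => simp
  | succ τ ih =>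
    rw [pow_succ', ← Matrix.mulVec_mulVec, walkMatrix_mulVec_apply hn hσ, abs_mul, abs_mul,
      hσ, hσ, one_mul, one_mul, ih, Function.iterate_succ_apply]

end CycleArc

theorem cycle_arc_search (n : ℕ) [NeZero n] (hn : 3 ≤ n) (a : CycleArc n) :
    let σ : CycleArc n → ℝ := fun w => if w = a then -1 else 1
    let U : Matrix (CycleArc n) (CycleArc n) ℝ := Matrix.of fun w z =>
      σ w.rev * σ z * (if w.1.1 = z.1.2 then 1 else 0) - (if w = z.rev then 1 else 0)
    let j : CycleArc n → ℝ := fun _ => 1 / Real.sqrt (2 * n)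
    (∀ (τ : ℕ) (w : CycleArc n),
        (U ^ τ).mulVec j w = 1 / Real.sqrt (2 * n) ∨
          (U ^ τ).mulVec j w = -(1 / Real.sqrt (2 * n))) ∧
      ∀ τ : ℕ, |(U ^ τ).mulVec j a| ^ 2 = 1 / (2 * n) := by
  intro σ U j
  have hσ : ∀ u, |σ u| = 1 := fun u => by by_cases h : u = a <;> simp [σ, h]
  have habs : ∀ τ w, |(U ^ τ).mulVec j w| = 1 / Real.sqrt (2 * n) := fun τ w => by
    rw [show U = CycleArc.walkMatrix σ from rfl,
      CycleArc.abs_walkMatrix_pow_mulVec_apply hn hσ, abs_of_nonneg (by positivity)]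
  refine ⟨fun τ w => (abs_eq (by positivity)).mp (habs τ w), fun τ => ?_⟩
  rw [habs, div_pow, one_pow, Real.sq_sqrt (by positivity)]
end

section
/- Let P_n be the path graph on n ≥ 2 vertices with symmetric arc set A (so |A| = 2n−2), let a ∈ A be marked with sign function σ_a, and let U be the matrix with entries U_{w,z} = (2σ_a(w⁻¹)σ_a(z)/deg o(w))·δ_{o(w),t(z)} − δ_{w,z⁻¹}. Then for every non-negative integer τ and every arc w, the w-entry of U^τ applied to the normalized all-ones vector j = (1/√(2n−2))·𝟙 equals ±1/√(2n−2). In particular |(U^τ j)_a|² = 1/(2n−2). -/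
/-- The symmetric arc set of the path graph `P_n` on vertex set `Fin n`
(vertices `0, 1, …, n-1`, edges `{k, k+1}`):
arcs `(x, y)` with `y = x + 1` or `x = y + 1`. -/
def PathArc (n : ℕ) : Type :=
  {p : Fin n × Fin n // p.2.val = p.1.val + 1 ∨ p.1.val = p.2.val + 1}

instance (n : ℕ) : Fintype (PathArc n) := by
  unfold PathArc; infer_instance

instance (n : ℕ) : DecidableEq (PathArc n) := by
  unfold PathArc; infer_instance

/-- The reversal `a⁻¹` of an arc. -/
def PathArc.rev {n : ℕ} (w : PathArc n) : PathArc n :=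
  ⟨(w.1.2, w.1.1), w.2.symm⟩

/-- The degree of a vertex of the path graph `P_n`: endpoints have degree 1,
interior vertices degree 2. -/
def pathDeg (n : ℕ) (x : Fin n) : ℕ :=
  if x.val = 0 ∨ x.val = n - 1 then 1 else 2

lemma pathArc_mulVec_eq {n : ℕ} (σ v : PathArc n → ℝ) (w : PathArc n) :
    (Matrix.of fun w z : PathArc n =>
        2 * σ w.rev * σ z / (pathDeg n w.1.1 : ℝ) * (if w.1.1 = z.1.2 then 1 else 0) -
          (if w = z.rev then 1 else 0)).mulVec v w =
      (2 * σ w.rev / (pathDeg n w.1.1 : ℝ)) *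
        ∑ z ∈ Finset.univ.filter (fun z : PathArc n => w.1.1 = z.1.2), σ z * v z
        - v w.rev := by
  classical
  have hrev : ∀ z : PathArc n, (w = z.rev) = (w.rev = z) := by
    intro z
    apply propext
    constructor
    · rintro rfl; rfl
    · rintro rfl; rfl
  simp only [Matrix.mulVec, dotProduct, Matrix.of_apply, sub_mul,
    Finset.sum_sub_distrib, hrev]
  congr 1
  · rw [Finset.mul_sum, Finset.sum_filter]
    apply Finset.sum_congr rfl
    intro z _
    split_ifs with h <;> ring
  · simp

lemma pathArc_step {n : ℕ} (hn : 2 ≤ n) (σ v : PathArc n → ℝ) (c : ℝ)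
    (hσ : ∀ z, σ z = 1 ∨ σ z = -1) (hv : ∀ z, v z = c ∨ v z = -c) (w : PathArc n) :
    (Matrix.of fun w z : PathArc n =>
        2 * σ w.rev * σ z / (pathDeg n w.1.1 : ℝ) * (if w.1.1 = z.1.2 then 1 else 0) -
          (if w = z.rev then 1 else 0)).mulVec v w = c ∨
    (Matrix.of fun w z : PathArc n =>
        2 * σ w.rev * σ z / (pathDeg n w.1.1 : ℝ) * (if w.1.1 = z.1.2 then 1 else 0) -
          (if w = z.rev then 1 else 0)).mulVec v w = -c := by
  classical
  rw [pathArc_mulVec_eq]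
  have hw := w.2
  have hlt1 : w.1.1.val < n := w.1.1.isLt
  have hlt2 : w.1.2.val < n := w.1.2.isLt
  by_cases hd1 : w.1.1.val = 0 ∨ w.1.1.val = n - 1
  · -- endpoint: only one arc into o(w), namely w.rev
    have hd : pathDeg n w.1.1 = 1 := by unfold pathDeg; rw [if_pos hd1]
    have hS : Finset.univ.filter (fun z : PathArc n => w.1.1 = z.1.2) = {w.rev} := by
      ext z
      simp only [Finset.mem_filter, Finset.mem_univ, true_and, Finset.mem_singleton]
      constructor
      · intro hz
        have hz2 := z.2
        have e1 : z.1.2.val = w.1.1.val := by rw [← hz]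
        have e2 : z.1.1.val = w.1.2.val := by omega
        apply Subtype.ext
        have : z.1.1 = w.1.2 := Fin.ext e2
        have h2 : z.1.2 = w.1.1 := Fin.ext e1
        exact Prod.ext this h2
      · rintro rfl; rfl
    rw [hS, Finset.sum_singleton, hd, Nat.cast_one]
    rcases hσ w.rev with h1 | h1 <;> rcases hv w.rev with h2 | h2 <;> rw [h1, h2]
    · left; ring
    · right; ring
    · left; ring
    · right; ring
  · -- interior vertex: two arcs into o(w)
    push_neg at hd1
    obtain ⟨h0, hn1⟩ := hd1
    have hd : pathDeg n w.1.1 = 2 := by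
      unfold pathDeg; rw [if_neg]; push_neg; exact ⟨h0, hn1⟩
    -- the two arcs into w.1.1 : from below and from above
    set zdn : PathArc n :=
      ⟨(⟨w.1.1.val - 1, by omega⟩, w.1.1),
        Or.inl (show w.1.1.val = w.1.1.val - 1 + 1 by omega)⟩ with hzdn
    set zup : PathArc n := ⟨(⟨w.1.1.val + 1, by omega⟩, w.1.1), Or.inr rfl⟩ with hzup
    have hrevcases : w.rev = zdn ∨ w.rev = zup := by
      rcases hw with h | h
      · right
        apply Subtype.ext
        apply Prod.ext
        · exact Fin.ext (show w.1.2.val = w.1.1.val + 1 from h)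
        · rfl
      · left
        apply Subtype.ext
        apply Prod.ext
        · exact Fin.ext (show w.1.2.val = w.1.1.val - 1 by omega)
        · rfl
    have hne : zdn ≠ zup := by
      intro h
      have h' : w.1.1.val - 1 = w.1.1.val + 1 :=
        congrArg (fun z : PathArc n => z.1.1.val) h
      omega
    have hS : Finset.univ.filter (fun z : PathArc n => w.1.1 = z.1.2) = {zdn, zup} := by
      ext z
      simp only [Finset.mem_filter, Finset.mem_univ, true_and, Finset.mem_insert,
        Finset.mem_singleton]
      constructor
      · intro hz
        have hz2 := z.2
        have e1 : z.1.2.val = w.1.1.val := by rw [← hz]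
        have h2 : z.1.2 = w.1.1 := Fin.ext e1
        rcases hz2 with h | h
        · left
          apply Subtype.ext
          apply Prod.ext
          · exact Fin.ext (show z.1.1.val = w.1.1.val - 1 by omega)
          · exact h2
        · right
          apply Subtype.ext
          apply Prod.ext
          · exact Fin.ext (show z.1.1.val = w.1.1.val + 1 by omega)
          · exact h2
      · rintro (rfl | rfl) <;> rfl
    rw [hS, Finset.sum_pair hne, hd, Nat.cast_two]
    -- now compute depending on which of zdn/zup is w.rev
    rcases hrevcases with hcase | hcase
    · -- w.rev = zdn, the "other" arc is zup
      have hexp :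
          2 * σ w.rev / 2 * (σ zdn * v zdn + σ zup * v zup) - v w.rev =
            σ w.rev * σ zup * v zup := by
        rw [← hcase]
        rcases hσ w.rev with h1 | h1 <;> rw [h1] <;> ring
      rw [hexp]
      rcases hσ w.rev with h1 | h1 <;> rcases hσ zup with h2 | h2 <;>
        rcases hv zup with h3 | h3 <;> rw [h1, h2, h3]
      · left; ring
      · right; ring
      · right; ring
      · left; ring
      · right; ring
      · left; ring
      · left; ring
      · right; ring
    · -- w.rev = zup, the "other" arc is zdn
      have hexp :
          2 * σ w.rev / 2 * (σ zdn * v zdn + σ zup * v zup) - v w.rev =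
            σ w.rev * σ zdn * v zdn := by
        rw [← hcase]
        rcases hσ w.rev with h1 | h1 <;> rw [h1] <;> ring
      rw [hexp]
      rcases hσ w.rev with h1 | h1 <;> rcases hσ zdn with h2 | h2 <;>
        rcases hv zdn with h3 | h3 <;> rw [h1, h2, h3]
      · left; ring
      · right; ring
      · right; ring
      · left; ring
      · right; ring
      · left; ring
      · left; ring
      · right; ring

theorem path_arc_search (n : ℕ) (hn : 2 ≤ n) (a : PathArc n) :
    let σ : PathArc n → ℝ := fun w => if w = a then -1 else 1
    let U : Matrix (PathArc n) (PathArc n) ℝ := Matrix.of fun w z =>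
      2 * σ w.rev * σ z / (pathDeg n w.1.1 : ℝ) * (if w.1.1 = z.1.2 then 1 else 0) -
        (if w = z.rev then 1 else 0)
    let j : PathArc n → ℝ := fun _ => 1 / Real.sqrt (2 * n - 2)
    (∀ (τ : ℕ) (w : PathArc n),
        (U ^ τ).mulVec j w = 1 / Real.sqrt (2 * n - 2) ∨
          (U ^ τ).mulVec j w = -(1 / Real.sqrt (2 * n - 2))) ∧
      ∀ τ : ℕ, |(U ^ τ).mulVec j a| ^ 2 = 1 / (2 * n - 2) := by
  intro σ U j
  have hσ : ∀ z, σ z = 1 ∨ σ z = -1 := by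
    intro z
    by_cases h : z = a
    · right; simp [σ, h]
    · left; simp [σ, h]
  set c : ℝ := 1 / Real.sqrt (2 * n - 2) with hc
  have key : ∀ (τ : ℕ) (w : PathArc n),
      (U ^ τ).mulVec j w = c ∨ (U ^ τ).mulVec j w = -c := by
    intro τ
    induction τ with
    | zero =>
        intro w
        left
        rw [pow_zero, Matrix.one_mulVec]
    | succ t ih =>
        intro w
        rw [pow_succ', ← Matrix.mulVec_mulVec]
        exact pathArc_step hn σ ((U ^ t).mulVec j) c hσ ih w
  refine ⟨key, ?_⟩
  intro τ
  have ht : (0:ℝ) ≤ 2 * n - 2 := by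
    have : (2:ℝ) ≤ n := by exact_mod_cast hn
    linarith
  have habs : c ^ 2 = 1 / (2 * (n:ℝ) - 2) := by
    rw [hc, div_pow, one_pow, Real.sq_sqrt ht]
  rcases key τ a with h | h <;> rw [h]
  · rw [sq_abs]; exact habs
  · rw [abs_neg, sq_abs]; exact habs
end
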